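/- Let p be a prime, n a nonnegative integer, and let P be a nontrivial finite p-group of nilpotence class at most n(p-1)+1. If Q is a subgroup of P such that the centralizer C_P(℧ⁿ(Z(Q))) equals Q, then Q = P. -/

import Mathlib

/-!
Suppose `Q < P`. Since `P` is nilpotent, `Q` is properly contained in its normalizer, and as `P`
is a `p`-group we find `x ∈ N_P(Q) \ Q` with `x ^ p ∈ Q`. Conjugation by `x` is an automorphism
`T` of the abelian group `Z = Z(Q)` with `T ^ p = 1`, and `u = T - 1` acts as `z ↦ ⁅x, z⁆`, so
`u ^ (n(p-1)+1) = 0` by the class bound. In the ring `End(Z)`, expanding `(1 + u) ^ p = 1` gives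
`p u = u ^ p v` with `v` a unit, whence `p ^ n u = u ^ (n(p-1)+1) v ^ n = 0`. Thus `x` centralizes
`℧ⁿ(Z)`, i.e. `x ∈ C_P(℧ⁿ(Z(Q))) = Q`, a contradiction.
-/

/-- `℧ᵐ`-style subgroup: the subgroup generated by the `m`-th powers of elements of `H`.
For a `p`-group `H` and `m = p ^ n`, this is `℧ⁿ(H)`. -/
def mho {G : Type*} [Group G] (m : ℕ) (H : Subgroup G) : Subgroup G :=
  Subgroup.closure ((fun x => x ^ m) '' (H : Set G))

section PrimePowerUnipotent

variable {R : Type*} {p : ℕ}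

theorem exists_add_one_pow_prime_eq [CommRing R] (hp : p.Prime) (u : R) :
    ∃ w : R, (u + 1) ^ p = 1 + u ^ p + p * u * (1 + u * w) := by
  obtain ⟨q, rfl⟩ : ∃ q, p = q + 2 := ⟨p - 2, by have := hp.two_le; omega⟩
  refine ⟨∑ m ∈ Finset.range q, (((q + 2).choose (m + 2) / (q + 2) : ℕ) : R) * u ^ m, ?_⟩
  have hmiddle : ∑ m ∈ Finset.range q, u ^ (m + 2) * ((q + 2).choose (m + 2) : R) =
      (q + 2 : ℕ) * u * (u * ∑ m ∈ Finset.range q,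
        (((q + 2).choose (m + 2) / (q + 2) : ℕ) : R) * u ^ m) := by
    rw [Finset.mul_sum, Finset.mul_sum]
    refine Finset.sum_congr rfl fun m hm => ?_
    obtain ⟨e, he⟩ := hp.dvd_choose_self (k := m + 2) (by omega) (by simp at hm; omega)
    rw [he, Nat.mul_div_cancel_left _ (by omega)]
    push_cast
    ring
  rw [add_pow, Finset.sum_range_succ, Finset.sum_range_succ', Finset.sum_range_succ']
  simp only [one_pow, mul_one, zero_add, Nat.choose_self, Nat.choose_zero_right,
    Nat.choose_one_right]
  rw [hmiddle]
  push_cast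
  ring

theorem natCast_pow_mul_eq_zero_of_add_one_pow_eq_one' [CommRing R] (hp : p.Prime) (n : ℕ)
    {u : R} (hu : u ^ (n * (p - 1) + 1) = 0) (h : (u + 1) ^ p = 1) : (p : R) ^ n * u = 0 := by
  obtain ⟨w, hw⟩ := exists_add_one_pow_prime_eq hp u
  obtain ⟨v, hv⟩ := ((Commute.all u w).isNilpotent_mul_right ⟨_, hu⟩).isUnit_one_add
  have hpu : (p : R) * u = u ^ p * -↑v⁻¹ := by
    rw [← v.mul_inv_cancel_right ((p : R) * u), hv]
    linear_combination (↑v⁻¹ : R) * (hw.symm.trans h)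
  obtain ⟨q, rfl⟩ : ∃ q, p = q + 1 := ⟨p - 1, (Nat.sub_add_cancel hp.one_le).symm⟩
  have hpow : ∀ j : ℕ, ((q + 1 : ℕ) : R) ^ j * u = u ^ (j * q + 1) * (-↑v⁻¹) ^ j := by
    intro j
    induction j with
    | zero => simp
    | succ j ih =>
      calc ((q + 1 : ℕ) : R) ^ (j + 1) * u = ((q + 1 : ℕ) : R) ^ j * u * (q + 1 : ℕ) := by ring
        _ = u ^ (j * q) * (-↑v⁻¹) ^ j * ((q + 1 : ℕ) * u) := by rw [ih]; ring
        _ = u ^ ((j + 1) * q + 1) * (-↑v⁻¹) ^ (j + 1) := by rw [hpu]; ring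
  rw [add_tsub_cancel_right] at hu
  rw [hpow, hu, zero_mul]

open scoped IsMulCommutative in
theorem natCast_pow_mul_eq_zero_of_add_one_pow_eq_one [Ring R] (hp : p.Prime) (n : ℕ)
    {u : R} (hu : u ^ (n * (p - 1) + 1) = 0) (h : (u + 1) ^ p = 1) : (p : R) ^ n * u = 0 := by
  have := Subring.isMulCommutative_closure (s := {u}) (by simp)
  let u' : Subring.closure {u} := ⟨u, Subring.subset_closure rfl⟩
  exact congrArg Subtype.val
    (natCast_pow_mul_eq_zero_of_add_one_pow_eq_one' hp n (u := u') (Subtype.ext hu) (Subtype.ext h))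

end PrimePowerUnipotent

namespace Subgroup

open scoped IsMulCommutative commutatorElement

variable {G : Type*} [Group G]

theorem le_centralizer_map_subtype_center (H : Subgroup G) :
    H ≤ centralizer ((center H).map H.subtype) := by
  rintro h hh _ ⟨a, ha, rfl⟩
  exact (congrArg Subtype.val (mem_center_iff.mp ha ⟨h, hh⟩)).symm

theorem normalizer_le_normalizer_map_subtype_center (H : Subgroup G) :
    normalizer (H : Set G) ≤ normalizer ((center H).map H.subtype : Set G) := by
  have conj_mem : ∀ g ∈ normalizer (H : Set G), ∀ z ∈ (center H).map H.subtype,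
      g * z * g⁻¹ ∈ (center H).map H.subtype := by
    rintro g hg _ ⟨a, ha, rfl⟩
    exact ⟨H.normalizerMonoidHom ⟨g, hg⟩ a, MulEquivClass.apply_mem_center _ ha, rfl⟩
  intro g hg z
  refine ⟨conj_mem g hg z, fun h => ?_⟩
  simpa [mul_assoc] using conj_mem g⁻¹ (inv_mem hg) _ h

variable {Z : Subgroup G} [IsMulCommutative Z]

theorem coe_toMul_ofMulDistribMulAction_sub_one_apply (g : normalizer (Z : Set G))
    (a : Additive Z) :
    (((Representation.ofMulDistribMulAction _ Z g - 1) a).toMul : G) = ⁅(g : G), (a.toMul : G)⁆ := by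
  simp only [LinearMap.sub_apply, Representation.ofMulDistribMulAction_apply_apply,
    Module.End.one_apply, toMul_sub, toMul_ofMul, commutatorElement_def, div_eq_mul_inv]
  rfl

theorem coe_toMul_ofMulDistribMulAction_sub_one_pow_apply_mem_lowerCentralSeries
    (g : normalizer (Z : Set G)) (k : ℕ) (a : Additive Z) :
    ((((Representation.ofMulDistribMulAction _ Z g - 1) ^ k) a).toMul : G) ∈
      (⊤ : Subgroup G).lowerCentralSeries k := by
  induction k generalizing a with
  | zero => exact mem_top _
  | succ k ih =>
    rw [pow_succ', Module.End.mul_apply, coe_toMul_ofMulDistribMulAction_sub_one_apply,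
      lowerCentralSeries_succ, commutator_comm]
    exact commutator_mem_commutator (mem_top _) (ih a)

theorem commute_pow_prime_pow_of_mem_normalizer {p : ℕ} (hp : p.Prime) (n : ℕ)
    (hG : (⊤ : Subgroup G).lowerCentralSeries (n * (p - 1) + 1) = ⊥) {x : G}
    (hx : x ∈ normalizer (Z : Set G)) (hxp : x ^ p ∈ centralizer Z) {z : G} (hz : z ∈ Z) :
    Commute x (z ^ p ^ n) := by
  set ρ := Representation.ofMulDistribMulAction (normalizer (Z : Set G)) Z
  have hnil : (ρ ⟨x, hx⟩ - 1) ^ (n * (p - 1) + 1) = 0 := LinearMap.ext fun a => by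
    have := coe_toMul_ofMulDistribMulAction_sub_one_pow_apply_mem_lowerCentralSeries ⟨x, hx⟩
      (n * (p - 1) + 1) a
    rw [hG, mem_bot] at this
    exact Additive.toMul.injective (Subtype.ext this)
  have hperiod : (ρ ⟨x, hx⟩ - 1 + 1) ^ p = 1 := by
    rw [sub_add_cancel, ← map_pow]
    refine LinearMap.ext fun a => Additive.toMul.injective (Subtype.ext ?_)
    change x ^ p * _ * (x ^ p)⁻¹ = _
    rw [← mem_centralizer_iff.mp hxp _ (Additive.toMul a).2, mul_inv_cancel_right]
    rfl
  have hkill := natCast_pow_mul_eq_zero_of_add_one_pow_eq_one hp n hnil hperiod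
  have hfix : (ρ ⟨x, hx⟩ - 1) (Additive.ofMul (⟨z, hz⟩ ^ p ^ n)) = 0 :=
    calc (ρ ⟨x, hx⟩ - 1) (Additive.ofMul (⟨z, hz⟩ ^ p ^ n))
        = ((p : Module.End ℤ (Additive Z)) ^ n * (ρ ⟨x, hx⟩ - 1)) (Additive.ofMul ⟨z, hz⟩) := by
          rw [ofMul_pow, map_nsmul, ← Nat.cast_pow, Module.End.mul_apply,
            Module.End.natCast_apply]
      _ = 0 := by rw [hkill]; rfl
  have hcomm := congrArg (fun a : Additive Z => (a.toMul : G)) hfix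
  rw [coe_toMul_ofMulDistribMulAction_sub_one_apply] at hcomm
  exact commutatorElement_eq_one_iff_commute.mp (by simpa using hcomm)

end Subgroup

theorem IsPGroup.exists_pow_notMem_and_pow_prime_mem {G : Type*} [Group G] {p : ℕ}
    (hG : IsPGroup p G) {H : Subgroup G} {y : G} (hy : y ∉ H) :
    ∃ k, y ^ p ^ k ∉ H ∧ (y ^ p ^ k) ^ p ∈ H := by
  obtain ⟨k, hk⟩ := hG y
  obtain ⟨j, hj, hj'⟩ := Nat.exists_not_and_succ_of_not_zero_of_exists
    (p := fun k => y ^ p ^ k ∈ H) (by simpa using hy) ⟨k, hk ▸ one_mem H⟩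
  exact ⟨j, hj, by rwa [← pow_mul, ← pow_succ]⟩

theorem eq_top_of_centralizer_mho_center_eq_general (p n : ℕ) (hp : p.Prime)
    (P : Type*) [Group P] (hP : IsPGroup p P)
    (hclass : upperCentralSeries P (n * (p - 1) + 1) = ⊤)
    (Q : Subgroup P)
    (hQ : Subgroup.centralizer
      ((mho (p ^ n) ((Subgroup.center ↥Q).map Q.subtype) : Subgroup P) : Set P) = Q) :
    Q = ⊤ := by
  by_contra hQ_ne
  have : Group.IsNilpotent P := ⟨⟨_, hclass⟩⟩
  obtain ⟨y, hyN, hyQ⟩ := SetLike.exists_of_lt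
    (Group.normalizerCondition_of_isNilpotent Q (lt_top_iff_ne_top.mpr hQ_ne))
  obtain ⟨k, hxQ, hxpQ⟩ := hP.exists_pow_notMem_and_pow_prime_mem hyQ
  apply hxQ
  rw [← hQ, mho, Subgroup.centralizer_closure, Subgroup.mem_centralizer_iff]
  rintro _ ⟨z, hz, rfl⟩
  exact (Subgroup.commute_pow_prime_pow_of_mem_normalizer hp n
    (Subgroup.lowerCentralSeries_eq_bot_iff_upperCentralSeries_eq_top.mpr hclass)
    (Subgroup.normalizer_le_normalizer_map_subtype_center Q (pow_mem hyN _))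
    (Subgroup.le_centralizer_map_subtype_center Q hxpQ) hz).symm

/-- (Goldschmidt) If `P` is a nontrivial finite `p`-group of nilpotence class at most
`n(p-1)+1` and `Q ≤ P` satisfies `C_P(℧ⁿ(Z(Q))) = Q`, then `Q = P`. -/
theorem eq_top_of_centralizer_mho_center_eq (p n : ℕ) (hp : p.Prime)
    (P : Type*) [Group P] [Finite P] [Nontrivial P] (hP : IsPGroup p P)
    (hclass : upperCentralSeries P (n * (p - 1) + 1) = ⊤)
    (Q : Subgroup P)
    (hQ : Subgroup.centralizer
      ((mho (p ^ n) ((Subgroup.center ↥Q).map Q.subtype) : Subgroup P) : Set P) = Q) :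
    Q = ⊤ :=
  eq_top_of_centralizer_mho_center_eq_general p n hp P hP hclass Q hQ
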